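/- Fix ν^* > ν_* > 0. There exists a constant C_* > 0 depending only on ν^* and ν_* such that for all ν_1, ν_2 ∈ [ν_*, ν^*], all k = (k_1,k_2,k_3) ∈ ℤ³∖{(0,0,0)} and all j ∈ {1,2,3}, the magnetogeostrophic Fourier symbols satisfy |k|² |M̂^{ν_1}_j(k) − M̂^{ν_2}_j(k)| ≤ C_* |ν_1 − ν_2|. -/

import Mathlib

open scoped BigOperators

noncomputable section

/-- Fourier coefficients of a (distributional) function on the `d`-dimensional torus
`𝕋^d = [0,2π]^d`. -/
abbrev TorusCoeffs (d : ℕ) := (Fin d → ℤ) → ℂ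

namespace ActiveScalar

variable {d : ℕ}

/-- Euclidean length of a frequency vector `k ∈ ℤ^d`. -/
def freqNorm (k : Fin d → ℤ) : ℝ := Real.sqrt (∑ i, ((k i : ℝ)) ^ 2)

/-- Zero mean over the torus. -/
def MeanZero (f : TorusCoeffs d) : Prop := f 0 = 0

/-- The function on the torus represented by the Fourier coefficients `f`. -/
def toFun (f : TorusCoeffs d) (x : Fin d → ℝ) : ℂ :=
  ∑' k : Fin d → ℤ, f k * Complex.exp (Complex.I * ∑ i, (k i : ℂ) * (x i : ℂ))

/-- Square of the `L²` norm (by Parseval, up to a fixed constant). -/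
def l2NormSq (f : TorusCoeffs d) : ℝ := ∑' k : Fin d → ℤ, ‖f k‖ ^ 2

def l2Norm (f : TorusCoeffs d) : ℝ := Real.sqrt (l2NormSq f)

/-- Square of the inhomogeneous Sobolev `H^s` norm. -/
def sobolevNormSq (s : ℝ) (f : TorusCoeffs d) : ℝ :=
  ∑' k : Fin d → ℤ, (1 + freqNorm k ^ 2) ^ s * ‖f k‖ ^ 2

def sobolevNorm (s : ℝ) (f : TorusCoeffs d) : ℝ := Real.sqrt (sobolevNormSq s f)

/-- Membership in the Sobolev space `H^s`. -/
def InHs (s : ℝ) (f : TorusCoeffs d) : Prop :=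
  Summable (fun k : Fin d → ℤ => (1 + freqNorm k ^ 2) ^ s * ‖f k‖ ^ 2)

/-- `C^∞` smoothness: membership in every Sobolev space. -/
def SmoothFn (f : TorusCoeffs d) : Prop := ∀ s : ℝ, InHs s f

/-- Square of the homogeneous norm `‖Λ^s f‖_{L²}`, `Λ = (-Δ)^{1/2}`. -/
def lambdaNormSq (s : ℝ) (f : TorusCoeffs d) : ℝ :=
  ∑' k : Fin d → ℤ, freqNorm k ^ (2 * s) * ‖f k‖ ^ 2

def lambdaNorm (s : ℝ) (f : TorusCoeffs d) : ℝ := Real.sqrt (lambdaNormSq s f)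

/-- Square of the Gevrey norm `‖Λ^r e^{τ Λ^σ} f‖_{L²}` (σ = 1/s gives Gevrey class s;
σ = 1 gives the real-analytic norm with radius of analyticity τ). -/
def gevreyNormSq (σ r τ : ℝ) (f : TorusCoeffs d) : ℝ :=
  ∑' k : Fin d → ℤ, freqNorm k ^ (2 * r) * Real.exp (2 * τ * freqNorm k ^ σ) * ‖f k‖ ^ 2

def gevreyNorm (σ r τ : ℝ) (f : TorusCoeffs d) : ℝ := Real.sqrt (gevreyNormSq σ r τ f)

/-- Membership in the Gevrey class: finiteness of `‖Λ^r e^{τ Λ^σ} f‖_{L²}`. -/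
def InGevrey (σ r τ : ℝ) (f : TorusCoeffs d) : Prop :=
  Summable (fun k : Fin d → ℤ =>
    freqNorm k ^ (2 * r) * Real.exp (2 * τ * freqNorm k ^ σ) * ‖f k‖ ^ 2)

/-- The `L^∞` norm of the function represented by `f`. -/
def linftyNorm (f : TorusCoeffs d) : ℝ := ⨆ x : Fin d → ℝ, ‖toFun f x‖

/-- Membership in `L^∞`. -/
def InLinfty (f : TorusCoeffs d) : Prop :=
  BddAbove (Set.range fun x : Fin d → ℝ => ‖toFun f x‖)

/-- Hölder seminorm `[f]_{C^α}`. -/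
def holderSeminorm (α : ℝ) (f : TorusCoeffs d) : ℝ :=
  ⨆ (x : Fin d → ℝ) (y : Fin d → ℝ) (_ : x ≠ y),
    ‖toFun f x - toFun f y‖ / dist x y ^ α

/-- Hölder norm `‖f‖_{C^α} = ‖f‖_{L^∞} + [f]_{C^α}`. -/
def holderNorm (α : ℝ) (f : TorusCoeffs d) : ℝ := linftyNorm f + holderSeminorm α f

/-- Membership in the Hölder space `C^α`. -/
def InHolder (α : ℝ) (f : TorusCoeffs d) : Prop :=
  InLinfty f ∧ ∃ C : ℝ, ∀ x y : Fin d → ℝ, x ≠ y →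
    ‖toFun f x - toFun f y‖ ≤ C * dist x y ^ α

def setAvgC (s : Set (Fin d → ℝ)) (g : (Fin d → ℝ) → ℂ) : ℂ :=
  MeasureTheory.average (MeasureTheory.volume.restrict s) g

def setAvgR (s : Set (Fin d → ℝ)) (g : (Fin d → ℝ) → ℝ) : ℝ :=
  MeasureTheory.average (MeasureTheory.volume.restrict s) g

/-- BMO seminorm: supremum over balls of the mean oscillation. -/
def bmoNorm (f : TorusCoeffs d) : ℝ :=
  ⨆ (x : Fin d → ℝ) (r : ℝ) (_ : 0 < r),
    setAvgR (Metric.ball x r) (fun y => ‖toFun f y - setAvgC (Metric.ball x r) (toFun f)‖)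

/-- The drift velocity `u_j[θ] = ∂_{x_i} T_{ij}[θ]` determined by Fourier multiplier
symbols `T i j`. -/
def velocity (T : Fin d → Fin d → (Fin d → ℤ) → ℂ) (θ : TorusCoeffs d) (j : Fin d) :
    TorusCoeffs d :=
  fun k => (∑ i : Fin d, Complex.I * (k i : ℂ) * T i j k) * θ k

/-- Fourier coefficients of the advection term `u · ∇θ`. -/
def advection (u : Fin d → TorusCoeffs d) (θ : TorusCoeffs d) : TorusCoeffs d :=
  fun k => ∑' l : Fin d → ℤ, ∑ j : Fin d, u j (k - l) * (Complex.I * (l j : ℂ)) * θ l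

/-- `θ` solves the forced active scalar equation
`∂_t θ + u·∇θ = -κ Λ^γ θ + S`, `u_j = ∂_{x_i} T_{ij}[θ]`, `θ(0) = θ₀`, for times in `I`. -/
def IsSolutionOn (T : Fin d → Fin d → (Fin d → ℤ) → ℂ) (κ γ : ℝ) (S θ₀ : TorusCoeffs d)
    (θ : ℝ → TorusCoeffs d) (I : Set ℝ) : Prop :=
  θ 0 = θ₀ ∧ ∀ k : Fin d → ℤ, ∀ t ∈ I,
    HasDerivAt (fun τ : ℝ => θ τ k)
      (-(advection (velocity T (θ t)) (θ t) k)
        - Complex.ofReal (κ * freqNorm k ^ γ) * θ t k + S k) t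

/-- Assumptions A1–A5 on the family of Fourier multiplier operators `{T^ν_{ij}}_{ν ≥ 0}`. -/
structure SymbolAssumptions (d : ℕ) (T : ℝ → Fin d → Fin d → (Fin d → ℤ) → ℂ) : Prop where
  /-- A1: `∂_{x_i} ∂_{x_j} T^ν_{ij} f = 0` (so the velocity is divergence-free). -/
  a1 : ∀ ν ≥ (0:ℝ), ∀ k : Fin d → ℤ,
    (∑ i : Fin d, ∑ j : Fin d, (k i : ℂ) * (k j : ℂ) * T ν i j k) = 0
  /-- A2: `T^ν_{ij} : L^∞ → BMO` bounded uniformly in `ν ≥ 0`. -/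
  a2 : ∃ C > (0:ℝ), ∀ ν ≥ (0:ℝ), ∀ i j : Fin d, ∀ f : TorusCoeffs d,
    bmoNorm (fun k => T ν i j k * f k) ≤ C * linftyNorm f
  /-- A3: for ν > 0 the symbols decay like `|k|^{-3}`. -/
  a3 : ∀ ν > (0:ℝ), ∃ C > (0:ℝ), ∀ i j : Fin d, ∀ k : Fin d → ℤ, k ≠ 0 →
    ‖T ν i j k‖ ≤ C * freqNorm k ^ (-3 : ℝ)
  /-- A4: the zero mode vanishes. -/
  a4 : ∀ ν ≥ (0:ℝ), ∀ i j : Fin d, T ν i j 0 = 0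
  /-- A5: symbols bounded uniformly for `ν ∈ [0,1]`. -/
  a5 : ∃ C > (0:ℝ), ∀ ν ∈ Set.Icc (0:ℝ) 1, ∀ i j : Fin d, ∀ k : Fin d → ℤ, k ≠ 0 →
    ‖T ν i j k‖ ≤ C

/-- Assumptions on the (singular, order one) operators `T^0_{ij}` at `ν = 0`:
divergence-free velocity, vanishing zero mode, symbols bounded by `C₀`. -/
structure SymbolAssumptions0 (d : ℕ) (T : Fin d → Fin d → (Fin d → ℤ) → ℂ) (C₀ : ℝ) :
    Prop where
  a1 : ∀ k : Fin d → ℤ, (∑ i : Fin d, ∑ j : Fin d, (k i : ℂ) * (k j : ℂ) * T i j k) = 0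
  a4 : ∀ i j : Fin d, T i j 0 = 0
  a5 : ∀ i j : Fin d, ∀ k : Fin d → ℤ, k ≠ 0 → ‖T i j k‖ ≤ C₀

/-- `H^1` distance between two functions. -/
def distH1 (f g : TorusCoeffs d) : ℝ := sobolevNorm 1 (f - g)

/-- `L²` distance between two functions. -/
def distL2 (f g : TorusCoeffs d) : ℝ := l2Norm (f - g)

/-- The phase space: mean-zero elements of `H^1`. -/
def PhaseH1 (d : ℕ) : Set (TorusCoeffs d) := {f | MeanZero f ∧ InHs 1 f}

/-- Boundedness in `H^1`. -/
def BoundedH1 (B : Set (TorusCoeffs d)) : Prop := ∃ R : ℝ, ∀ f ∈ B, sobolevNorm 1 f ≤ R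

/-- Boundedness in `L²`. -/
def BoundedL2 (B : Set (TorusCoeffs d)) : Prop := ∃ R : ℝ, ∀ f ∈ B, l2Norm f ≤ R

/-- `π` is the solution (semigroup) map of the active scalar equation on the `H^1`
phase space. -/
def IsSolutionMap (T : Fin d → Fin d → (Fin d → ℤ) → ℂ) (κ γ : ℝ) (S : TorusCoeffs d)
    (π : ℝ → TorusCoeffs d → TorusCoeffs d) : Prop :=
  (∀ f, π 0 f = f) ∧
  (∀ s ≥ (0:ℝ), ∀ t ≥ (0:ℝ), ∀ f ∈ PhaseH1 d, π (s + t) f = π s (π t f)) ∧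
  (∀ f ∈ PhaseH1 d, IsSolutionOn T κ γ S f (fun t => π t f) (Set.Ici 0))

/-- Sequential compactness with respect to a distance function `ρ`. -/
def SeqCompactWith (ρ : TorusCoeffs d → TorusCoeffs d → ℝ) (G : Set (TorusCoeffs d)) :
    Prop :=
  ∀ u : ℕ → TorusCoeffs d, (∀ n, u n ∈ G) →
    ∃ g ∈ G, ∃ φ : ℕ → ℕ, StrictMono φ ∧
      Filter.Tendsto (fun n => ρ (u (φ n)) g) Filter.atTop (nhds 0)

/-- Compactness in `H^1` (sequential form). -/
def SeqCompactH1 (G : Set (TorusCoeffs d)) : Prop := SeqCompactWith distH1 G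

/-- Compactness in `L²` (sequential form). -/
def SeqCompactL2 (G : Set (TorusCoeffs d)) : Prop := SeqCompactWith distL2 G

/-- `G` attracts all `H^1`-bounded subsets of the phase space, in the `H^1`
Hausdorff semidistance. -/
def AttractsH1 (π : ℝ → TorusCoeffs d → TorusCoeffs d) (G : Set (TorusCoeffs d)) : Prop :=
  ∀ B : Set (TorusCoeffs d), B ⊆ PhaseH1 d → BoundedH1 B →
    ∀ ε > (0:ℝ), ∃ t₀ : ℝ, ∀ t ≥ t₀, ∀ f ∈ B, ∃ g ∈ G, distH1 (π t f) g < ε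

/-- Global attractor in `H^1`: nonempty, compact, invariant, attracting all bounded sets. -/
def IsGlobalAttractorH1 (π : ℝ → TorusCoeffs d → TorusCoeffs d)
    (G : Set (TorusCoeffs d)) : Prop :=
  G.Nonempty ∧ G ⊆ PhaseH1 d ∧ SeqCompactH1 G ∧
    (∀ t ≥ (0:ℝ), π t '' G = G) ∧ AttractsH1 π G

/-- `B` is an absorbing set for `π` on the `H^1` phase space. -/
def IsAbsorbingH1 (π : ℝ → TorusCoeffs d → TorusCoeffs d) (B : Set (TorusCoeffs d)) :
    Prop :=
  ∀ B' : Set (TorusCoeffs d), B' ⊆ PhaseH1 d → BoundedH1 B' →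
    ∃ t₀ : ℝ, ∀ t ≥ t₀, ∀ f ∈ B', π t f ∈ B

/-- Minimal number of `ε`-balls (in `H^1`) needed to cover `G`. -/
def coverNum (G : Set (TorusCoeffs d)) (ε : ℝ) : ℕ :=
  sInf {n : ℕ | ∃ c : Finset (TorusCoeffs d), c.card = n ∧
    ∀ f ∈ G, ∃ g ∈ c, distH1 f g ≤ ε}

/-- The fractal (box-counting) dimension of `G` in `H^1` is at most `D`:
`limsup_{ε→0⁺} log N(G,ε) / (-log ε) ≤ D`. -/
def FractalDimLe (G : Set (TorusCoeffs d)) (D : ℝ) : Prop :=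
  ∀ D' > D, ∀ᶠ ε in nhdsWithin (0:ℝ) (Set.Ioi 0),
    Real.log (coverNum G ε) ≤ D' * (-Real.log ε)

/-- `G` has finite fractal dimension in `H^1`. -/
def HasFiniteFractalDim (G : Set (TorusCoeffs d)) : Prop := ∃ D : ℝ, FractalDimLe G D

/-- Continuity in time with values in `H^s`, on the time set `I`. -/
def ContinuousInHs (s : ℝ) (θ : ℝ → TorusCoeffs d) (I : Set ℝ) : Prop :=
  (∀ t ∈ I, InHs s (θ t)) ∧ ∀ t₀ ∈ I,
    Filter.Tendsto (fun t => sobolevNorm s (θ t - θ t₀)) (nhdsWithin t₀ I) (nhds 0)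

/-- `θ ∈ L²(I; H^s)`. -/
def L2InTimeHs (s : ℝ) (θ : ℝ → TorusCoeffs d) (I : Set ℝ) : Prop :=
  MeasureTheory.IntegrableOn (fun t => (sobolevNorm s (θ t)) ^ 2) I ∧
    ∀ᵐ t ∂(MeasureTheory.volume.restrict I), InHs s (θ t)

/-- (Real) `H^1` inner product, `⟨f,g⟩_{H^1}`. -/
def h1InnerR (f g : TorusCoeffs d) : ℝ :=
  ((2 * Real.pi) ^ d) *
    (∑' k : Fin d → ℤ, Complex.ofReal (1 + freqNorm k ^ 2) * (starRingEnd ℂ) (f k) * g k).re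

/-- The linearized operator `A_θ[ψ] = -κΛ^γψ - u[θ]·∇ψ - u[ψ]·∇θ`. -/
def linOp (T : Fin d → Fin d → (Fin d → ℤ) → ℂ) (κ γ : ℝ) (θ ψ : TorusCoeffs d) :
    TorusCoeffs d :=
  fun k => -Complex.ofReal (κ * freqNorm k ^ γ) * ψ k
    - advection (velocity T θ) ψ k - advection (velocity T ψ) θ k

/-- The pairing `∫_{𝕋^d} (-Δφ) A_θ[φ] dx` entering the trace `Tr(P_n A_θ)`. -/
def tracePair (T : Fin d → Fin d → (Fin d → ℤ) → ℂ) (κ γ : ℝ) (θ φ : TorusCoeffs d) : ℝ :=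
  ((2 * Real.pi) ^ d) *
    (∑' k : Fin d → ℤ, Complex.ofReal (freqNorm k ^ 2) *
      (starRingEnd ℂ) (φ k) * linOp T κ γ θ φ k).re

/-- One-sided Hausdorff semidistance `sup_{φ∈A} inf_{ψ∈B} ρ(φ,ψ)`. -/
def hausSemidist (ρ : TorusCoeffs d → TorusCoeffs d → ℝ) (A B : Set (TorusCoeffs d)) : ℝ :=
  sSup {c : ℝ | ∃ φ ∈ A, c = sInf {r : ℝ | ∃ ψ ∈ B, r = ρ φ ψ}}

/-! ### The magnetogeostrophic (MG) equation on `𝕋³` -/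

/-- `|k|²` for `k ∈ ℤ³`. -/
def mgNormSq (k : Fin 3 → ℤ) : ℝ :=
  ((k 0 : ℝ)) ^ 2 + ((k 1 : ℝ)) ^ 2 + ((k 2 : ℝ)) ^ 2

/-- Denominator `D(k) = |k|²k₃² + (k₂² + ν|k|⁴)²` of the MG symbols. -/
def mgD (ν : ℝ) (k : Fin 3 → ℤ) : ℝ :=
  mgNormSq k * ((k 2 : ℝ)) ^ 2 + (((k 1 : ℝ)) ^ 2 + ν * mgNormSq k ^ 2) ^ 2

/-- The MG Fourier multiplier symbols `M̂^ν_j(k)` (vanishing on `{k₃ = 0}`). -/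
def mgSymbol (ν : ℝ) (j : Fin 3) (k : Fin 3 → ℤ) : ℝ :=
  if k 2 = 0 then 0 else
    (if j = 0 then
        (k 1 : ℝ) * (k 2 : ℝ) * mgNormSq k -
          (k 0 : ℝ) * (k 2 : ℝ) * (((k 1 : ℝ)) ^ 2 + ν * mgNormSq k ^ 2)
      else if j = 1 then
        -((k 0 : ℝ)) * (k 2 : ℝ) * mgNormSq k -
          (k 1 : ℝ) * (k 2 : ℝ) * (((k 1 : ℝ)) ^ 2 + ν * mgNormSq k ^ 2)
      else
        (((k 0 : ℝ)) ^ 2 + ((k 1 : ℝ)) ^ 2) * (((k 1 : ℝ)) ^ 2 + ν * mgNormSq k ^ 2))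
      / mgD ν k

/-- The MG drift velocity `u_j = M^ν_j[θ]`. -/
def mgVelocity (ν : ℝ) (θ : TorusCoeffs 3) (j : Fin 3) : TorusCoeffs 3 :=
  fun k => (mgSymbol ν j k : ℂ) * θ k

/-- `θ` solves the MG equation `∂_tθ + u·∇θ = κΔθ + S`, `u = M^ν[θ]`, `θ(0) = θ₀`,
for all `t ≥ 0`. -/
def IsMGSolution (ν κ : ℝ) (S θ₀ : TorusCoeffs 3) (θ : ℝ → TorusCoeffs 3) : Prop :=
  θ 0 = θ₀ ∧ ∀ k : Fin 3 → ℤ, ∀ t ≥ (0:ℝ),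
    HasDerivAt (fun τ : ℝ => θ τ k)
      (-(advection (mgVelocity ν (θ t)) (θ t) k)
        - Complex.ofReal (κ * freqNorm k ^ 2) * θ t k + S k) t

/-- Zero vertical mean: Fourier modes with `k₃ = 0` vanish. -/
def VertZero (f : TorusCoeffs 3) : Prop := ∀ k : Fin 3 → ℤ, k 2 = 0 → f k = 0

/-- The MG `H^1` phase space. -/
def MGPhaseH1 : Set (TorusCoeffs 3) := {f | VertZero f ∧ InHs 1 f}

/-- The MG `L²` phase space. -/
def MGPhaseL2 : Set (TorusCoeffs 3) :=
  {f | VertZero f ∧ Summable (fun k : Fin 3 → ℤ => ‖f k‖ ^ 2)}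

/-- `π` is the MG solution (semigroup) map for viscosity `ν`. -/
def IsMGSolutionMap (ν κ : ℝ) (S : TorusCoeffs 3)
    (π : ℝ → TorusCoeffs 3 → TorusCoeffs 3) : Prop :=
  (∀ f, π 0 f = f) ∧
  (∀ s ≥ (0:ℝ), ∀ t ≥ (0:ℝ), ∀ f ∈ MGPhaseL2, π (s + t) f = π s (π t f)) ∧
  (∀ f ∈ MGPhaseL2, IsMGSolution ν κ S f (fun t => π t f))

def MGAttractsH1 (π : ℝ → TorusCoeffs 3 → TorusCoeffs 3) (G : Set (TorusCoeffs 3)) :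
    Prop :=
  ∀ B : Set (TorusCoeffs 3), B ⊆ MGPhaseH1 → BoundedH1 B →
    ∀ ε > (0:ℝ), ∃ t₀ : ℝ, ∀ t ≥ t₀, ∀ f ∈ B, ∃ g ∈ G, distH1 (π t f) g < ε

def MGAttractsL2 (π : ℝ → TorusCoeffs 3 → TorusCoeffs 3) (G : Set (TorusCoeffs 3)) :
    Prop :=
  ∀ B : Set (TorusCoeffs 3), B ⊆ MGPhaseL2 → BoundedL2 B →
    ∀ ε > (0:ℝ), ∃ t₀ : ℝ, ∀ t ≥ t₀, ∀ f ∈ B, ∃ g ∈ G, distL2 (π t f) g < ε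

/-- Global attractor of the MG^ν equation in `H^1`. -/
def IsMGAttractorH1 (π : ℝ → TorusCoeffs 3 → TorusCoeffs 3) (G : Set (TorusCoeffs 3)) :
    Prop :=
  G.Nonempty ∧ G ⊆ MGPhaseH1 ∧ SeqCompactH1 G ∧
    (∀ t ≥ (0:ℝ), π t '' G = G) ∧ MGAttractsH1 π G

/-- Global attractor of the MG⁰ equation in `L²`. -/
def IsMGAttractorL2 (π : ℝ → TorusCoeffs 3 → TorusCoeffs 3) (G : Set (TorusCoeffs 3)) :
    Prop :=
  G.Nonempty ∧ G ⊆ MGPhaseL2 ∧ SeqCompactL2 G ∧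
    (∀ t ≥ (0:ℝ), π t '' G = G) ∧ MGAttractsL2 π G

end ActiveScalar

/-!
On `{k₃ ≠ 0}`, dividing the numerator of `|k|² M̂^ν_j(k)` by `|k|⁶` and its denominator by `|k|⁸`
puts it in the form `(c + ν y) / (s + (p + ν)²)` with `|c| ≤ 2`, `|y| ≤ 1`, `s, p ∈ [0, 1]`.
The denominator of such a function is at least `ν_*²` on `[ν_*, ν^*]`, so cross-multiplying
shows it is Lipschitz there with a constant depending only on `ν_*, ν^*`.
-/

namespace ActiveScalar

open Set

lemma abs_affine_div_sub_le {c y s p νs νb ν₁ ν₂ : ℝ} (hνs : 0 < νs)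
    (hc : |c| ≤ 2) (hy : |y| ≤ 1) (hs₀ : 0 ≤ s) (hs₁ : s ≤ 1) (hp₀ : 0 ≤ p) (hp₁ : p ≤ 1)
    (h₁ : ν₁ ∈ Icc νs νb) (h₂ : ν₂ ∈ Icc νs νb) :
    |(c + ν₁ * y) / (s + (p + ν₁) ^ 2) - (c + ν₂ * y) / (s + (p + ν₂) ^ 2)|
      ≤ 6 * (1 + νb) ^ 2 / νs ^ 4 * |ν₁ - ν₂| := by
  obtain ⟨hν₁s, hν₁b⟩ := h₁
  obtain ⟨hν₂s, hν₂b⟩ := h₂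
  set D₁ := s + (p + ν₁) ^ 2
  set D₂ := s + (p + ν₂) ^ 2
  have hD₁ : νs ^ 2 ≤ D₁ := by nlinarith
  have hD₂ : νs ^ 2 ≤ D₂ := by nlinarith
  have hD : νs ^ 4 ≤ D₁ * D₂ := by
    calc νs ^ 4 = νs ^ 2 * νs ^ 2 := by ring
      _ ≤ D₁ * D₂ := mul_le_mul hD₁ hD₂ (by positivity) (by positivity)
  have hD₁₀ : 0 < D₁ := lt_of_lt_of_le (by positivity) hD₁
  have hD₂₀ : 0 < D₂ := lt_of_lt_of_le (by positivity) hD₂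
  have hνb : 0 ≤ νb := by linarith
  set F := y * D₂ - (c + ν₂ * y) * (2 * p + ν₁ + ν₂)
  have hdiff : (c + ν₁ * y) / D₁ - (c + ν₂ * y) / D₂ = (ν₁ - ν₂) * F / (D₁ * D₂) := by
    rw [div_sub_div _ _ hD₁₀.ne' hD₂₀.ne']
    ring
  have hF : |F| ≤ 6 * (1 + νb) ^ 2 := by
    have hy' : |y * D₂| ≤ 2 * (1 + νb) ^ 2 := by
      rw [abs_mul, abs_of_pos hD₂₀]
      nlinarith [abs_nonneg y]
    have hcy : |c + ν₂ * y| ≤ 2 * (1 + νb) := by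
      calc |c + ν₂ * y| ≤ |c| + |ν₂ * y| := abs_add_le _ _
        _ = |c| + ν₂ * |y| := by rw [abs_mul, abs_of_pos (by linarith : 0 < ν₂)]
        _ ≤ 2 * (1 + νb) := by nlinarith
    have hsum : |2 * p + ν₁ + ν₂| ≤ 2 * (1 + νb) := by
      rw [abs_of_pos (by linarith)]; linarith
    calc |F| ≤ |y * D₂| + |c + ν₂ * y| * |2 * p + ν₁ + ν₂| := by
          rw [← abs_mul]; exact abs_sub _ _
      _ ≤ 2 * (1 + νb) ^ 2 + (2 * (1 + νb)) * (2 * (1 + νb)) := by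
          gcongr
      _ = 6 * (1 + νb) ^ 2 := by ring
  rw [hdiff, abs_div, abs_mul, abs_of_pos (mul_pos hD₁₀ hD₂₀)]
  calc |ν₁ - ν₂| * |F| / (D₁ * D₂) ≤ |ν₁ - ν₂| * (6 * (1 + νb) ^ 2) / νs ^ 4 := by gcongr
    _ = 6 * (1 + νb) ^ 2 / νs ^ 4 * |ν₁ - ν₂| := by ring

lemma mul_affine_div_eq_rescaled {n A B S P ν : ℝ} (hn : n ≠ 0) :
    n * ((A + ν * B) / (S + (P + ν * n ^ 2) ^ 2)) =
      (A / n ^ 3 + ν * (B / n ^ 3)) / (S / n ^ 4 + (P / n ^ 2 + ν) ^ 2) := by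
  have hnum : A / n ^ 3 + ν * (B / n ^ 3) = (A + ν * B) / n ^ 3 := by ring
  have hden : S / n ^ 4 + (P / n ^ 2 + ν) ^ 2 = (S + (P + ν * n ^ 2) ^ 2) / n ^ 4 := by
    field_simp
  rw [hnum, hden, div_div_div_eq, show n ^ 4 = n * n ^ 3 by ring, mul_left_comm, mul_comm (n ^ 3),
    ← mul_assoc, mul_div_mul_right _ _ (pow_ne_zero 3 hn), mul_div_assoc]

lemma mgNormSq_nonneg (k : Fin 3 → ℤ) : 0 ≤ mgNormSq k := by
  unfold mgNormSq; positivity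

lemma sq_le_mgNormSq (k : Fin 3 → ℤ) (i : Fin 3) : ((k i : ℝ)) ^ 2 ≤ mgNormSq k := by
  unfold mgNormSq
  fin_cases i <;> simp only [Fin.zero_eta, Fin.mk_one, Fin.reduceFinMk] <;>
    nlinarith [sq_nonneg (k 0 : ℝ), sq_nonneg (k 1 : ℝ), sq_nonneg (k 2 : ℝ)]

lemma sq_add_sq_le_mgNormSq (k : Fin 3 → ℤ) : ((k 0 : ℝ)) ^ 2 + ((k 1 : ℝ)) ^ 2 ≤ mgNormSq k := by
  unfold mgNormSq; nlinarith [sq_nonneg (k 2 : ℝ)]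

lemma abs_mul_le_mgNormSq (k : Fin 3 → ℤ) (i j : Fin 3) :
    |(k i : ℝ) * k j| ≤ mgNormSq k := by
  rw [abs_mul]
  nlinarith [two_mul_le_add_sq |(k i : ℝ)| |(k j : ℝ)|, sq_abs (k i : ℝ), sq_abs (k j : ℝ),
    sq_le_mgNormSq k i, sq_le_mgNormSq k j]

lemma one_le_mgNormSq {k : Fin 3 → ℤ} (hk : k 2 ≠ 0) : 1 ≤ mgNormSq k := by
  have : (1 : ℝ) ≤ (k 2 : ℝ) ^ 2 :=
    (one_le_sq_iff_one_le_abs _).mpr (by exact_mod_cast Int.one_le_abs hk)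
  linarith [sq_le_mgNormSq k 2]

lemma exists_mgSymbol_eq_div {k : Fin 3 → ℤ} (hk : k 2 ≠ 0) (j : Fin 3) :
    ∃ u v : ℝ, |u| ≤ mgNormSq k ∧ |v| ≤ mgNormSq k ∧ ∀ ν,
      mgSymbol ν j k = (u * mgNormSq k + v * ((k 1 : ℝ) ^ 2 + ν * mgNormSq k ^ 2)) / mgD ν k := by
  fin_cases j
  · refine ⟨k 1 * k 2, -(k 0 * k 2), abs_mul_le_mgNormSq k 1 2, ?_, fun ν => ?_⟩
    · rw [abs_neg]; exact abs_mul_le_mgNormSq k 0 2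
    · simp only [mgSymbol, hk, ↓reduceIte, Fin.isValue, Fin.zero_eta]
      ring
  · refine ⟨-(k 0 * k 2), -(k 1 * k 2), ?_, ?_, fun ν => ?_⟩
    · rw [abs_neg]; exact abs_mul_le_mgNormSq k 0 2
    · rw [abs_neg]; exact abs_mul_le_mgNormSq k 1 2
    · simp only [mgSymbol, hk, ↓reduceIte, Fin.isValue, Fin.mk_one, one_ne_zero]
      ring
  · refine ⟨0, (k 0 : ℝ) ^ 2 + (k 1 : ℝ) ^ 2, by simp [mgNormSq_nonneg], ?_, fun ν => ?_⟩
    · rw [abs_of_nonneg (by positivity)]; exact sq_add_sq_le_mgNormSq k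
    · simp only [mgSymbol, hk, ↓reduceIte, Fin.isValue, Fin.reduceFinMk, Fin.reduceEq, zero_mul,
        zero_add]

lemma exists_mgNormSq_mul_mgSymbol_eq {k : Fin 3 → ℤ} (hk : k 2 ≠ 0) (j : Fin 3) :
    ∃ c y s p : ℝ, |c| ≤ 2 ∧ |y| ≤ 1 ∧ 0 ≤ s ∧ s ≤ 1 ∧ 0 ≤ p ∧ p ≤ 1 ∧
      ∀ ν, mgNormSq k * mgSymbol ν j k = (c + ν * y) / (s + (p + ν) ^ 2) := by
  obtain ⟨u, v, hu, hv, hM⟩ := exists_mgSymbol_eq_div hk j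
  have hn : 1 ≤ mgNormSq k := one_le_mgNormSq hk
  set n := mgNormSq k
  set P : ℝ := (k 1 : ℝ) ^ 2
  have hP : P ≤ n := sq_le_mgNormSq k 1
  have hn₀ : 0 < n := by linarith
  have hP₀ : 0 ≤ P := sq_nonneg _
  have hpow {a b : ℕ} (hab : a ≤ b) : n ^ a ≤ n ^ b := pow_le_pow_right₀ hn hab
  refine ⟨(u * n + v * P) / n ^ 3, v * n ^ 2 / n ^ 3, n * (k 2 : ℝ) ^ 2 / n ^ 4, P / n ^ 2,
    ?_, ?_, by positivity, ?_, by positivity, ?_, fun ν => ?_⟩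
  · rw [abs_div, abs_of_pos (pow_pos hn₀ 3), div_le_iff₀ (pow_pos hn₀ 3)]
    calc |u * n + v * P| ≤ |u * n| + |v * P| := abs_add_le _ _
      _ = |u| * n + |v| * P := by rw [abs_mul, abs_mul, abs_of_pos hn₀, abs_of_nonneg hP₀]
      _ ≤ n ^ 2 + n ^ 2 := by rw [sq]; gcongr
      _ ≤ 2 * n ^ 3 := by linarith [hpow (show 2 ≤ 3 by norm_num)]
  · rw [abs_div, abs_mul, abs_of_pos (pow_pos hn₀ 3), abs_of_pos (pow_pos hn₀ 2),
      div_le_one (pow_pos hn₀ 3)]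
    calc |v| * n ^ 2 ≤ n * n ^ 2 := by gcongr
      _ = n ^ 3 := by ring
  · rw [div_le_one (by positivity)]
    calc n * (k 2 : ℝ) ^ 2 ≤ n * n := by gcongr; exact sq_le_mgNormSq k 2
      _ = n ^ 2 := by ring
      _ ≤ n ^ 4 := hpow (by norm_num)
  · rw [div_le_one (by positivity)]
    calc P ≤ n ^ 1 := by rwa [pow_one]
      _ ≤ n ^ 2 := hpow (by norm_num)
  · rw [hM, mgD, ← mul_affine_div_eq_rescaled hn₀.ne']
    ring

/-- Lemma: Lipschitz estimate in `ν` for the MG Fourier symbols.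
Fix `ν^* > ν_* > 0`.  There is `C_* > 0` depending only on `ν^*, ν_*` such that for all
`ν₁, ν₂ ∈ [ν_*, ν^*]`, all `k ∈ ℤ³∖{0}` and all `j ∈ {1,2,3}`:
`|k|² |M̂^{ν₁}_j(k) − M̂^{ν₂}_j(k)| ≤ C_* |ν₁ − ν₂|`. -/
theorem mg_symbol_lipschitz
    (νs νb : ℝ) (hνs : 0 < νs) (hν : νs < νb) :
    ∃ C > (0:ℝ), ∀ ν₁ ∈ Set.Icc νs νb, ∀ ν₂ ∈ Set.Icc νs νb,
      ∀ k : Fin 3 → ℤ, k ≠ 0 → ∀ j : Fin 3,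
        mgNormSq k * |mgSymbol ν₁ j k - mgSymbol ν₂ j k| ≤ C * |ν₁ - ν₂| := by
  have hνb : 0 < νb := hνs.trans hν
  refine ⟨6 * (1 + νb) ^ 2 / νs ^ 4, by positivity, fun ν₁ h₁ ν₂ h₂ k _ j => ?_⟩
  by_cases hk : k 2 = 0
  · simp only [mgSymbol, hk, ↓reduceIte, sub_self, abs_zero, mul_zero]
    positivity
  obtain ⟨c, y, s, p, hc, hy, hs₀, hs₁, hp₀, hp₁, hM⟩ := exists_mgNormSq_mul_mgSymbol_eq hk j
  have key := abs_affine_div_sub_le hνs hc hy hs₀ hs₁ hp₀ hp₁ h₁ h₂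
  rwa [← hM, ← hM, ← mul_sub, abs_mul, abs_of_nonneg (mgNormSq_nonneg k)] at key

end ActiveScalar
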